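/- In the Kleene star construction G' = (V ∪ {S'}, Σ, S', R ∪ {S'→SS', S'→λ}, 𝟏) over a capacity-1 grammar G = (V, Σ, S, R, 𝟏), every admissible terminating derivation in G' that applies S'→SS' exactly k times yields a word w = w₁w₂⋯w_k where each wᵢ ∈ L(G). -/

import Mathlib

/-! Common definitions: symbols, context-free grammars, Ginsburg–Spanier phrase
structure grammars, capacity-bounded derivations, matrix/vector grammars,
finite index, cf Petri nets with place capacities, and language families. -/

inductive Symb (N T : Type) where
  | nt : N → Symb N T
  | tm : T → Symb N T
deriving DecidableEq

namespace CapGram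

variable {N T Δ α : Type}

open Classical in
/-- Number of occurrences of the nonterminal `A` in a sentential form. -/
noncomputable def symCount (A : N) : List (Symb N T) → ℕ
  | [] => 0
  | Symb.nt B :: r => (if B = A then 1 else 0) + symCount A r
  | Symb.tm _ :: r => symCount A r

/-- Total number of nonterminal occurrences in a sentential form. -/
def ntCount : List (Symb N T) → ℕ
  | [] => 0
  | Symb.nt _ :: r => 1 + ntCount r
  | Symb.tm _ :: r => ntCount r

/-- The sentential form `w` respects the capacity function `κ`. -/
def CapOK (κ : N → ℕ) (w : List (Symb N T)) : Prop :=
  ∀ A : N, symCount A w ≤ κ A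

/-- A context-free grammar (rules are pairs of a nonterminal and a word). -/
structure CFG (N T : Type) where
  start : N
  rules : Finset (N × List (Symb N T))

/-- Application of a single context-free rule. -/
def applyRule (r : N × List (Symb N T)) (u v : List (Symb N T)) : Prop :=
  ∃ x y : List (Symb N T), u = x ++ Symb.nt r.1 :: y ∧ v = x ++ r.2 ++ y

def CFG.Step (G : CFG N T) (u v : List (Symb N T)) : Prop :=
  ∃ r ∈ G.rules, applyRule r u v

/-- A derivation step both of whose sentential forms respect the capacity. -/
def CFG.CapStep (G : CFG N T) (κ : N → ℕ) (u v : List (Symb N T)) : Prop :=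
  G.Step u v ∧ CapOK κ u ∧ CapOK κ v

/-- A derivation step both of whose sentential forms have at most `k`
nonterminal occurrences in total. -/
def CFG.IdxStep (G : CFG N T) (k : ℕ) (u v : List (Symb N T)) : Prop :=
  G.Step u v ∧ ntCount u ≤ k ∧ ntCount v ≤ k

/-- The (unrestricted) language of a context-free grammar. -/
def CFG.Lang (G : CFG N T) : Set (List T) :=
  { w | Relation.ReflTransGen G.Step [Symb.nt G.start] (w.map Symb.tm) }

/-- The language of the capacity-bounded grammar `(G, κ)`. -/
def CFG.CapLang (G : CFG N T) (κ : N → ℕ) : Set (List T) :=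
  { w | Relation.ReflTransGen (G.CapStep κ) [Symb.nt G.start] (w.map Symb.tm) }

/-- Words with a derivation of index at most `k`. -/
def CFG.FinLang (G : CFG N T) (k : ℕ) : Set (List T) :=
  { w | Relation.ReflTransGen (G.IdxStep k) [Symb.nt G.start] (w.map Symb.tm) }

/-- A phrase structure grammar due to Ginsburg and Spanier: the left-hand side
of a rule is a nonempty word of nonterminals, encoded as head and tail. -/
structure GSG (N T : Type) where
  start : N
  rules : Finset ((N × List N) × List (Symb N T))

def GSG.Step (G : GSG N T) (u v : List (Symb N T)) : Prop :=
  ∃ r ∈ G.rules, ∃ x y : List (Symb N T),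
    u = x ++ (r.1.1 :: r.1.2).map Symb.nt ++ y ∧ v = x ++ r.2 ++ y

def GSG.CapStep (G : GSG N T) (κ : N → ℕ) (u v : List (Symb N T)) : Prop :=
  G.Step u v ∧ CapOK κ u ∧ CapOK κ v

def GSG.Lang (G : GSG N T) : Set (List T) :=
  { w | Relation.ReflTransGen G.Step [Symb.nt G.start] (w.map Symb.tm) }

def GSG.CapLang (G : GSG N T) (κ : N → ℕ) : Set (List T) :=
  { w | Relation.ReflTransGen (G.CapStep κ) [Symb.nt G.start] (w.map Symb.tm) }

/-- Derivations labeled by their sequence of context-free rules, where every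
sentential form (including the first and last) satisfies the invariant `P`. -/
inductive DerivP (P : List (Symb N T) → Prop) :
    List (N × List (Symb N T)) → List (Symb N T) → List (Symb N T) → Prop
  | nil (u : List (Symb N T)) : P u → DerivP P [] u u
  | cons {r π u v w} : P u → applyRule r u v → DerivP P π v w →
      DerivP P (r :: π) u w

/-- A matrix grammar: a finite set of matrices (sequences of cf rules). -/
structure MG (N T : Type) where
  start : N
  mats : Finset (List (N × List (Symb N T)))

/-- Matrix language: rule sequences are concatenations of matrices. -/
def MG.Lang (G : MG N T) : Set (List T) :=
  { w | ∃ ms : List (List (N × List (Symb N T))),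
      (∀ m ∈ ms, m ∈ G.mats) ∧
      DerivP (fun _ => True) ms.flatten [Symb.nt G.start] (w.map Symb.tm) }

/-- Words with a matrix derivation of index at most `k`. -/
def MG.FinLang (G : MG N T) (k : ℕ) : Set (List T) :=
  { w | ∃ ms : List (List (N × List (Symb N T))),
      (∀ m ∈ ms, m ∈ G.mats) ∧
      DerivP (fun u => ntCount u ≤ k) ms.flatten [Symb.nt G.start] (w.map Symb.tm) }

/-- `Shuffle ms π`: `π` is an interleaving (shuffle) of the lists in `ms`. -/
inductive Shuffle : List (List α) → List α → Prop
  | nil (ms : List (List α)) : (∀ l ∈ ms, l = []) → Shuffle ms []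
  | cons {ms₁ : List (List α)} {l : List α} {ms₂ : List (List α)} {π : List α}
      (a : α) : Shuffle (ms₁ ++ l :: ms₂) π →
      Shuffle (ms₁ ++ (a :: l) :: ms₂) (a :: π)

/-- A vector grammar: like a matrix grammar, but derivations use shuffles. -/
structure VG (N T : Type) where
  start : N
  mats : Finset (List (N × List (Symb N T)))

def VG.Lang (G : VG N T) : Set (List T) :=
  { w | ∃ ms π, (∀ m ∈ ms, m ∈ G.mats) ∧ Shuffle ms π ∧
      DerivP (fun _ => True) π [Symb.nt G.start] (w.map Symb.tm) }

def VG.CapLang (G : VG N T) (κ : N → ℕ) : Set (List T) :=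
  { w | ∃ ms π, (∀ m ∈ ms, m ∈ G.mats) ∧ Shuffle ms π ∧
      DerivP (CapOK κ) π [Symb.nt G.start] (w.map Symb.tm) }

def VG.FinLang (G : VG N T) (k : ℕ) : Set (List T) :=
  { w | ∃ ms π, (∀ m ∈ ms, m ∈ G.mats) ∧ Shuffle ms π ∧
      DerivP (fun u => ntCount u ≤ k) π [Symb.nt G.start] (w.map Symb.tm) }

/-! cf Petri nets: places are in bijection with the nonterminals, transitions
with the rules; firing the transition of rule `A → α` consumes one token from
the place of `A` and adds `|α|_X` tokens to the place of each nonterminal `X`. -/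

open Classical in
/-- Firing of the transition corresponding to rule `r`, turning marking `μ`
into marking `μ'`. -/
noncomputable def ruleFire (r : N × List (Symb N T)) (μ μ' : N → ℕ) : Prop :=
  1 ≤ μ r.1 ∧ ∀ A, μ' A = μ A - (if A = r.1 then 1 else 0) + symCount A r.2

/-- Occurrence sequences of the cf Petri net of `G`, all of whose markings
(including initial and final) satisfy the validity predicate `P`. -/
inductive FireSeqP (G : CFG N T) (P : (N → ℕ) → Prop) :
    List (N × List (Symb N T)) → (N → ℕ) → (N → ℕ) → Prop
  | nil (μ : N → ℕ) : P μ → FireSeqP G P [] μ μ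
  | cons {r π μ μ' μ''} : r ∈ G.rules → P μ → ruleFire r μ μ' →
      FireSeqP G P π μ' μ'' → FireSeqP G P (r :: π) μ μ''

open Classical in
/-- The initial marking: one token on the place of the start symbol. -/
noncomputable def initMark (G : CFG N T) : N → ℕ :=
  fun A => if A = G.start then 1 else 0

/-- The language of `G` controlled by its cf Petri net restricted to markings
satisfying `P` (e.g. a place capacity constraint). -/
def CFG.PNLang (G : CFG N T) (P : (N → ℕ) → Prop) : Set (List T) :=
  { w | ∃ π μ, DerivP (fun _ => True) π [Symb.nt G.start] (w.map Symb.tm) ∧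
      FireSeqP G P π (initMark G) μ }

/-! Language families over a terminal alphabet `T`. -/

/-- Context-free languages of finite index. -/
def CFfin (T : Type) : Set (Set (List T)) :=
  { L | ∃ (N : Type) (_ : Fintype N) (G : CFG N T) (k : ℕ),
      L = G.Lang ∧ G.Lang ⊆ G.FinLang k }

/-- Languages of capacity-bounded context-free grammars. -/
def CFcb (T : Type) : Set (Set (List T)) :=
  { L | ∃ (N : Type) (_ : Fintype N) (G : CFG N T) (κ : N → ℕ),
      L = G.CapLang κ }

/-- Languages of capacity-bounded Ginsburg–Spanier phrase structure grammars. -/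
def GScb (T : Type) : Set (Set (List T)) :=
  { L | ∃ (N : Type) (_ : Fintype N) (G : GSG N T) (κ : N → ℕ),
      L = G.CapLang κ }

/-- Matrix languages of finite index. -/
def MATfin (T : Type) : Set (Set (List T)) :=
  { L | ∃ (N : Type) (_ : Fintype N) (G : MG N T) (k : ℕ),
      L = G.Lang ∧ G.Lang ⊆ G.FinLang k }

/-- Capacity-bounded vector languages (erasing rules allowed). -/
def Vcb (T : Type) : Set (Set (List T)) :=
  { L | ∃ (N : Type) (_ : Fintype N) (G : VG N T) (κ : N → ℕ),
      L = G.CapLang κ }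

/-- Vector languages of finite index (erasing rules allowed). -/
def Vfin (T : Type) : Set (Set (List T)) :=
  { L | ∃ (N : Type) (_ : Fintype N) (G : VG N T) (k : ℕ),
      L = G.Lang ∧ G.Lang ⊆ G.FinLang k }

/-- Languages of grammars controlled by cf Petri nets with place capacities. -/
def PNcap (T : Type) : Set (Set (List T)) :=
  { L | ∃ (N : Type) (_ : Fintype N) (G : CFG N T) (κ : N → ℕ),
      L = G.PNLang (fun μ => ∀ A, μ A ≤ κ A) }


/-- Relabeling of symbols for the Kleene star construction. -/
def relabelSym : Symb N T → Symb (N ⊕ Unit) T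
  | .nt A => .nt (Sum.inl A)
  | .tm a => .tm a

/-- The Kleene star construction: add a fresh start symbol `S' = Sum.inr ()`
and the rules `S' → S S'` and `S' → λ`. -/
def kleeneExt [DecidableEq N] [DecidableEq T] (G : CFG N T) : CFG (N ⊕ Unit) T where
  start := Sum.inr ()
  rules :=
    (G.rules.image (fun r => (Sum.inl r.1, r.2.map relabelSym))) ∪
    {(Sum.inr (), [Symb.nt (Sum.inl G.start), Symb.nt (Sum.inr ())]),
     (Sum.inr (), ([] : List (Symb (N ⊕ Unit) T)))}

/-- Kleene closure of a language. -/
def KStar (L : Set (List T)) : Set (List T) :=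
  { w | ∃ ws : List (List T), (∀ u ∈ ws, u ∈ L) ∧ w = ws.flatten }



lemma symCount_append (A : N) (l₁ l₂ : List (Symb N T)) :
    symCount A (l₁ ++ l₂) = symCount A l₁ + symCount A l₂ := by
  induction l₁ with
  | nil => simp [symCount]
  | cons s l ih => cases s <;> simp [symCount, ih] <;> omega

lemma symCount_relabel_inl (A : N) (u : List (Symb N T)) :
    symCount (Sum.inl A : N ⊕ Unit) (u.map relabelSym) = symCount A u := by
  induction u with
  | nil => rfl
  | cons s u ih =>
    cases s with
    | nt B =>
      by_cases hBA : B = A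
      · subst hBA; simp [relabelSym, symCount, ih]
      · simp [relabelSym, symCount, ih, hBA, Sum.inl.injEq]
    | tm a => simp [relabelSym, symCount, ih]

lemma capOK_of_seg {p q : List (Symb (N ⊕ Unit) T)} {u : List (Symb N T)}
    (h : CapOK (fun _ => 1) (p ++ u.map relabelSym ++ q)) :
    CapOK (fun _ : N => 1) u := by
  intro A
  have h2 : symCount (Sum.inl A : N ⊕ Unit) (p ++ u.map relabelSym ++ q) ≤ 1 := h (Sum.inl A)
  rw [symCount_append, symCount_append, symCount_relabel_inl] at h2
  show symCount A u ≤ 1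
  omega

/-- concatenation of relabeled segments -/
def seg (us : List (List (Symb N T))) : List (Symb (N ⊕ Unit) T) :=
  (us.map (List.map relabelSym)).flatten

@[simp] lemma seg_nil : seg ([] : List (List (Symb N T))) = [] := rfl

@[simp] lemma seg_cons (u : List (Symb N T)) (us : List (List (Symb N T))) :
    seg (u :: us) = u.map relabelSym ++ seg us := rfl

@[simp] lemma seg_append (us vs : List (List (Symb N T))) :
    seg (us ++ vs) = seg us ++ seg vs := by
  simp [seg]

lemma relabel_ne_inr (s : Symb N T) : relabelSym s ≠ Symb.nt (Sum.inr ()) := by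
  cases s <;> simp [relabelSym]

lemma not_mem_seg_inr (us : List (List (Symb N T))) :
    Symb.nt (Sum.inr ()) ∉ seg us := by
  intro h
  rw [seg, List.mem_flatten] at h
  obtain ⟨l, hl, hmem⟩ := h
  obtain ⟨u, _, rfl⟩ := List.mem_map.mp hl
  obtain ⟨s, _, hs⟩ := List.mem_map.mp hmem
  exact relabel_ne_inr s hs

lemma relabel_map_eq_tm : ∀ (u : List (Symb N T)) (w : List T),
    u.map relabelSym = w.map Symb.tm → u = w.map Symb.tm := by
  intro u
  induction u with
  | nil => intro w h; simp_all
  | cons s u ih =>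
    intro w h
    cases w with
    | nil => simp at h
    | cons a w =>
      simp only [List.map_cons, List.cons.injEq] at h ⊢
      obtain ⟨h1, h2⟩ := h
      refine ⟨?_, ih w h2⟩
      cases s <;> simp [relabelSym] at h1 ⊢ <;> exact h1

lemma map_relabel_split : ∀ (u : List (Symb N T)) (x y : List (Symb (N ⊕ Unit) T)) (A : N),
    u.map relabelSym = x ++ Symb.nt (Sum.inl A) :: y →
    ∃ u₁ u₂, u = u₁ ++ Symb.nt A :: u₂ ∧ x = u₁.map relabelSym ∧ y = u₂.map relabelSym := by
  intro u
  induction u with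
  | nil => intro x y A h; simp at h
  | cons s u ih =>
    intro x y A h
    cases x with
    | nil =>
      simp only [List.map_cons, List.nil_append, List.cons.injEq] at h
      obtain ⟨h1, h2⟩ := h
      cases s with
      | nt B =>
        simp [relabelSym] at h1
        exact ⟨[], u, by simp [h1], rfl, h2.symm⟩
      | tm a => simp [relabelSym] at h1
    | cons e x =>
      simp only [List.map_cons, List.cons_append, List.cons.injEq] at h
      obtain ⟨h1, h2⟩ := h
      obtain ⟨u₁, u₂, hu, hx, hy⟩ := ih x y A h2
      exact ⟨s :: u₁, u₂, by simp [hu], by simp [hx, h1], hy⟩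

lemma seg_locate : ∀ (us : List (List (Symb N T))) (t x y : List (Symb (N ⊕ Unit) T)) (A : N),
    Symb.nt (Sum.inl A) ∉ t →
    seg us ++ t = x ++ Symb.nt (Sum.inl A) :: y →
    ∃ us₁ u₁ u₂ us₂, us = us₁ ++ (u₁ ++ Symb.nt A :: u₂) :: us₂ ∧
      x = seg us₁ ++ u₁.map relabelSym ∧
      y = u₂.map relabelSym ++ seg us₂ ++ t := by
  intro us
  induction us with
  | nil =>
    intro t x y A hA h
    simp only [seg_nil, List.nil_append] at h
    exact absurd (h ▸ List.mem_append_right x List.mem_cons_self) hA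
  | cons u us ih =>
    intro t x y A hA h
    rw [seg_cons, List.append_assoc] at h
    rcases List.append_eq_append_iff.mp h with ⟨a', hx, hrest⟩ | ⟨c', hu, hcy⟩
    · -- occurrence in seg us ++ t
      obtain ⟨us₁, u₁, u₂, us₂, h1, h2, h3⟩ := ih t a' y A hA hrest
      exact ⟨u :: us₁, u₁, u₂, us₂, by simp [h1], by simp [hx, h2], h3⟩
    · cases c' with
      | nil =>
        rw [List.append_nil] at hu
        rw [List.nil_append] at hcy
        obtain ⟨us₁, u₁, u₂, us₂, h1, h2, h3⟩ := ih t [] y A hA hcy.symm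
        have h2' := h2.symm
        rw [List.append_eq_nil_iff] at h2'
        obtain ⟨hs1, hm1⟩ := h2'
        refine ⟨u :: us₁, u₁, u₂, us₂, by simp [h1], ?_, h3⟩
        simp [← hu, hs1, hm1]
      | cons e c'' =>
        simp only [List.cons_append, List.cons.injEq] at hcy
        obtain ⟨he, hy⟩ := hcy
        rw [← he] at hu
        obtain ⟨u₁, u₂, h1, h2, h3⟩ := map_relabel_split u x c'' A hu
        exact ⟨[], u₁, u₂, us, by simp [h1], by simp [h2], by simp [hy, h3]⟩

lemma seg_locate_end (us : List (List (Symb N T))) (x y : List (Symb (N ⊕ Unit) T))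
    (h : seg us ++ [Symb.nt (Sum.inr ())] = x ++ Symb.nt (Sum.inr ()) :: y) :
    x = seg us ∧ y = [] := by
  rcases List.append_eq_append_iff.mp h with ⟨a', hx, hrest⟩ | ⟨c', hu, hcy⟩
  · cases a' with
    | nil =>
      rw [List.append_nil] at hx
      rw [List.nil_append] at hrest
      exact ⟨hx, (List.cons_eq_cons.mp hrest.symm).2⟩
    | cons e a'' =>
      exfalso
      have hl := congrArg List.length hrest
      simp only [List.length_cons, List.length_append, List.length_nil] at hl
      omega
  · cases c' with
    | nil =>
      rw [List.append_nil] at hu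
      rw [List.nil_append] at hcy
      exact ⟨hu.symm, (List.cons_eq_cons.mp hcy).2⟩
    | cons e c'' =>
      simp only [List.cons_append, List.cons.injEq] at hcy
      exfalso
      apply not_mem_seg_inr us
      rw [hu, ← hcy.1]
      exact List.mem_append_right x List.mem_cons_self

lemma beq_rule_false₁ {N T : Type} [DecidableEq N] [DecidableEq T] (A : N)
    (l l' : List (Symb (N ⊕ Unit) T)) :
    (((Sum.inl A, l) : (N ⊕ Unit) × List (Symb (N ⊕ Unit) T)) == (Sum.inr (), l')) = false := rfl

lemma beq_rule_false₂ {N T : Type} [DecidableEq N] [DecidableEq T]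
    (l : List (Symb (N ⊕ Unit) T)) (x : Symb (N ⊕ Unit) T) :
    ((((Sum.inr ()), ([] : List (Symb (N ⊕ Unit) T))) : (N ⊕ Unit) × List (Symb (N ⊕ Unit) T))
      == ((Sum.inr (), x :: l))) = false := rfl

lemma beq_rule_true {N T : Type} [DecidableEq N] [DecidableEq T] (S : N) :
    ((((Sum.inr ()), [Symb.nt (Sum.inl S), Symb.nt (Sum.inr ())]) :
        (N ⊕ Unit) × List (Symb (N ⊕ Unit) T)) ==
     ((Sum.inr ()), [Symb.nt (Sum.inl S), Symb.nt (Sum.inr ())])) = true := by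
  show (_ && _) = true
  simp [instBEqProd, Sum.instBEq, List.instBEq, List.beq, beq_self_eq_true']
  rfl

lemma derivP_headP {P : List (Symb N T) → Prop} {π u v} (h : DerivP P π u v) : P u := by
  cases h <;> assumption

lemma derivP_nil_inv {P : List (Symb N T) → Prop} {u v} (h : DerivP P [] u v) : u = v := by
  cases h; rfl

lemma derivP_cons_inv {P : List (Symb N T) → Prop} {r π u v} (h : DerivP P (r :: π) u v) :
    P u ∧ ∃ u', applyRule r u u' ∧ DerivP P π u' v := by
  cases h with
  | cons hP happ htail => exact ⟨hP, _, happ, htail⟩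

lemma seg_terminal {S : N} : ∀ (us : List (List (Symb N T))) (w : List T),
    seg us = w.map Symb.tm →
    (∀ u ∈ us, Relation.ReflTransGen (CFG.CapStep ⟨S, ∅⟩ (fun _ => 1)) [Symb.nt S] u) →
    True := by
  intro _ _ _ _; trivial

-- ===== main lemma =====

lemma kleene_main {N T : Type} [DecidableEq N] [DecidableEq T] (G : CFG N T) (w : List T) :
    ∀ (π : List ((N ⊕ Unit) × List (Symb (N ⊕ Unit) T))) (us : List (List (Symb N T))) (b : Bool),
    (∀ r ∈ π, r ∈ (kleeneExt G).rules) →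
    DerivP (CapOK fun _ => 1) π
      (seg us ++ (if b then [Symb.nt (Sum.inr ())] else [])) (w.map Symb.tm) →
    (∀ u ∈ us, Relation.ReflTransGen (G.CapStep fun _ => 1) [Symb.nt G.start] u) →
    ∃ ws : List (List T),
      ws.length = us.length +
        π.count ((Sum.inr ()), [Symb.nt (Sum.inl G.start), Symb.nt (Sum.inr ())]) ∧
      (∀ u ∈ ws, u ∈ G.CapLang fun _ => 1) ∧ w = ws.flatten := by
  intro π
  induction π with
  | nil =>
    intro us b hrules hder hreach
    have heq := derivP_nil_inv hder
    cases b with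
    | true =>
      exfalso
      have : Symb.nt (Sum.inr () : N ⊕ Unit) ∈ List.map (Symb.tm (N := N ⊕ Unit)) w := by
        rw [← heq]
        simp
      simp at this
    | false =>
      rw [if_neg Bool.false_ne_true, List.append_nil] at heq
      -- seg us = w.map tm
      clear hder hrules
      simp only [List.count_nil, Nat.add_zero]
      induction us generalizing w with
      | nil =>
        refine ⟨[], rfl, by simp, ?_⟩
        have : w.map (Symb.tm (N := N ⊕ Unit)) = [] := heq.symm
        simp at this
        simp [this]
      | cons u us ihus =>
        rw [seg_cons] at heq
        obtain ⟨w₁, w₂, hw, hw1, hw2⟩ := List.map_eq_append_iff.mp heq.symm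
        have hu : u = w₁.map Symb.tm := relabel_map_eq_tm u w₁ hw1.symm
        obtain ⟨ws, hlen, hmem, hflat⟩ := ihus w₂
          (fun v hv => hreach v (List.mem_cons_of_mem _ hv)) hw2.symm
        refine ⟨w₁ :: ws, by simp [hlen], ?_, by simp [hw, hflat]⟩
        intro v hv
        rcases List.mem_cons.mp hv with rfl | hv
        · have h0 := hreach u List.mem_cons_self
          rw [hu] at h0
          exact h0
        · exact hmem v hv
  | cons r π ih =>
    intro us b hrules hder hreach
    obtain ⟨hP, v', ⟨x, y, hv, hv'⟩, htail⟩ := derivP_cons_inv hder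
    have hP' := derivP_headP htail
    have hrmem := hrules r List.mem_cons_self
    have hrules' : ∀ r' ∈ π, r' ∈ (kleeneExt G).rules :=
      fun r' hr' => hrules r' (List.mem_cons_of_mem _ hr')
    simp only [kleeneExt, Finset.mem_union, Finset.mem_image, Finset.mem_insert,
      Finset.mem_singleton] at hrmem
    rcases hrmem with ⟨⟨A, β⟩, hGr, hr⟩ | hr | hr
    · -- a rule of G, relabeled
      subst hr
      dsimp only at hv hv'
      -- locate nt (inl A) in seg us ++ t
      have hnotin : Symb.nt (Sum.inl A) ∉ (if b then [Symb.nt (Sum.inr () : N ⊕ Unit)] else ([] : List (Symb (N ⊕ Unit) T))) := by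
        cases b <;> simp
      obtain ⟨us₁, u₁, u₂, us₂, hus, hx, hy⟩ := seg_locate us _ x y A hnotin hv
      set t := (if b then [Symb.nt (Sum.inr () : N ⊕ Unit)] else ([] : List (Symb (N ⊕ Unit) T))) with ht
      set uold := u₁ ++ Symb.nt A :: u₂ with huold
      set unew := u₁ ++ β ++ u₂ with hunew
      have hvdecomp : x ++ Symb.nt (Sum.inl A) :: y
          = seg us₁ ++ uold.map relabelSym ++ (seg us₂ ++ t) := by
        simp [hx, hy, huold, relabelSym, List.append_assoc]
      have hv'decomp : v' = seg us₁ ++ unew.map relabelSym ++ (seg us₂ ++ t) := by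
        simp [hv', hx, hy, hunew, relabelSym, List.append_assoc]
      have capold : CapOK (fun _ : N => 1) uold := by
        apply capOK_of_seg (p := seg us₁) (q := seg us₂ ++ t)
        rw [← hvdecomp, ← hv]; exact hP
      have capnew : CapOK (fun _ : N => 1) unew := by
        apply capOK_of_seg (p := seg us₁) (q := seg us₂ ++ t)
        rw [← hv'decomp]; exact hP'
      have hstep : G.CapStep (fun _ => 1) uold unew :=
        ⟨⟨(A, β), hGr, u₁, u₂, rfl, by rw [hunew]⟩, capold, capnew⟩
      have htail' : DerivP (CapOK fun _ => 1) π
          (seg (us₁ ++ unew :: us₂) ++ t) (w.map Symb.tm) := by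
        have : seg (us₁ ++ unew :: us₂) ++ t
            = seg us₁ ++ unew.map relabelSym ++ (seg us₂ ++ t) := by
          simp [List.append_assoc]
        rw [this, ← hv'decomp]; exact htail
      have hreach' : ∀ u ∈ us₁ ++ unew :: us₂,
          Relation.ReflTransGen (G.CapStep fun _ => 1) [Symb.nt G.start] u := by
        intro u hu
        rcases List.mem_append.mp hu with h1 | h2
        · exact hreach u (hus ▸ List.mem_append_left _ h1)
        · rcases List.mem_cons.mp h2 with rfl | h3
          · exact (hreach uold (hus ▸ List.mem_append_right _ List.mem_cons_self)).tail hstep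
          · exact hreach u (hus ▸ List.mem_append_right _ (List.mem_cons_of_mem _ h3))
      obtain ⟨ws, hlen, hmem, hflat⟩ := ih (us₁ ++ unew :: us₂) b hrules' htail' hreach'
      refine ⟨ws, ?_, hmem, hflat⟩
      rw [hlen, hus, List.count_cons]
      simp [beq_rule_false₁, List.length_append]
    · -- the rule S' → S S'
      subst hr
      dsimp only at hv hv'
      cases b with
      | false =>
        exfalso
        apply not_mem_seg_inr us
        rw [if_neg Bool.false_ne_true, List.append_nil] at hv
        rw [hv]
        exact List.mem_append_right x List.mem_cons_self
      | true =>
        simp only [if_pos rfl] at hv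
        obtain ⟨hxe, hye⟩ := seg_locate_end us x y hv
        subst hxe hye
        have htail' : DerivP (CapOK fun _ => 1) π
            (seg (us ++ [[Symb.nt G.start]]) ++ [Symb.nt (Sum.inr ())]) (w.map Symb.tm) := by
          have : seg (us ++ [[Symb.nt G.start]]) ++ [Symb.nt (Sum.inr () : N ⊕ Unit)]
              = seg us ++ [Symb.nt (Sum.inl G.start), Symb.nt (Sum.inr ())] ++ [] := by
            simp [seg, relabelSym]
          rw [this, ← hv']; exact htail
        have hreach' : ∀ u ∈ us ++ [[Symb.nt G.start]],
            Relation.ReflTransGen (G.CapStep fun _ => 1) [Symb.nt G.start] u := by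
          intro u hu
          rcases List.mem_append.mp hu with h1 | h2
          · exact hreach u h1
          · simp at h2; subst h2; exact Relation.ReflTransGen.refl
        obtain ⟨ws, hlen, hmem, hflat⟩ := ih (us ++ [[Symb.nt G.start]]) true hrules' htail' hreach'
        refine ⟨ws, ?_, hmem, hflat⟩
        rw [hlen, List.count_cons, beq_rule_true]
        simp [List.length_append]
        omega
    · -- the rule S' → λ
      subst hr
      dsimp only at hv hv'
      cases b with
      | false =>
        exfalso
        apply not_mem_seg_inr us
        rw [if_neg Bool.false_ne_true, List.append_nil] at hv
        rw [hv]
        exact List.mem_append_right x List.mem_cons_self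
      | true =>
        simp only [if_pos rfl] at hv
        obtain ⟨hxe, hye⟩ := seg_locate_end us x y hv
        subst hxe hye
        have htail' : DerivP (CapOK fun _ => 1) π
            (seg us ++ (if (false : Bool) then [Symb.nt (Sum.inr () : N ⊕ Unit)] else [])) (w.map Symb.tm) := by
          have : seg us ++ (if (false : Bool) then [Symb.nt (Sum.inr () : N ⊕ Unit)] else [])
              = seg us ++ [] ++ [] := by simp
          rw [this, ← hv']; exact htail
        obtain ⟨ws, hlen, hmem, hflat⟩ := ih us false hrules' htail' hreach
        refine ⟨ws, ?_, hmem, hflat⟩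
        rw [hlen, List.count_cons]
        simp [beq_rule_false₂]


/-- in the Kleene star construction, every admissible
terminating derivation applying S'→SS' exactly k times yields a word
w = w₁w₂⋯w_k with each wᵢ ∈ L(G). -/
theorem kleene_decomposition {N T : Type} [DecidableEq N] [DecidableEq T]
    (G : CFG N T) (k : ℕ) (π : List ((N ⊕ Unit) × List (Symb (N ⊕ Unit) T)))
    (w : List T)
    (hrules : ∀ r ∈ π, r ∈ (kleeneExt G).rules)
    (hcount : π.count
      ((Sum.inr (), [Symb.nt (Sum.inl G.start), Symb.nt (Sum.inr ())])) = k)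
    (hder : DerivP (CapOK fun _ => 1) π
      [Symb.nt (kleeneExt G).start] (w.map Symb.tm)) :
    ∃ ws : List (List T), ws.length = k ∧
      (∀ u ∈ ws, u ∈ G.CapLang (fun _ => 1)) ∧ w = ws.flatten := by
  have hder' : DerivP (CapOK fun _ => 1) π
      (seg ([] : List (List (Symb N T))) ++ (if (true : Bool) then [Symb.nt (Sum.inr () : N ⊕ Unit)] else []))
      (w.map Symb.tm) := by
    simpa [kleeneExt] using hder
  obtain ⟨ws, hlen, hmem, hflat⟩ := kleene_main G w π [] true hrules hder' (by simp)
  exact ⟨ws, by simpa [hcount] using hlen, hmem, hflat⟩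


end CapGram
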